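/- arXiv:1611.06974 — 3 statements merged into one kernel-verified Lean document; each statement's English description precedes it below -/
import Mathlib

section
/- Let G be a nontrivial finite group, P a free G-poset, and c : C_P → {1, …, C} a proper coloring of the compatibility graph. Define λ(x) = (g_x^{-1}, c(g_x·x)) as above. If x, y ∈ P are comparable and c(g_x·x) = c(g_y·y), then g_x = g_y. Consequently, λ is order-preserving into the poset G × {1,…,C−|G|+1} ordered by (h,x) < (g,y) iff x < y, i.e., λ maps every chain of P to a set of elements with pairwise distinct second coordinates. -/
/-- The compatibility graph of a `G`-poset `P` (action preserving the strict order):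
vertices are elements of `P`, and `x ~ y` iff `x ≠ y` and there is `g ≠ 1` with
`x` and `g • y` comparable. -/
def compatGraph (G : Type*) {P : Type*} [Group G] [PartialOrder P] [MulAction G P]
    (hm : ∀ g : G, ∀ x y : P, x < y → g • x < g • y) : SimpleGraph P where
  Adj x y := x ≠ y ∧ ∃ g : G, g ≠ 1 ∧ (x ≤ g • y ∨ g • y ≤ x)
  symm := by
    have hmono : ∀ (g : G), Monotone (fun z : P => g • z) := by
      intro g a b hab
      rcases eq_or_lt_of_le hab with h | h
      · simp [h]
      · exact (hm g a b h).le
    constructor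
    rintro x y ⟨hxy, g, hg, h⟩
    refine ⟨hxy.symm, g⁻¹, by simpa using hg, ?_⟩
    rcases h with h | h
    · right
      have := hmono g⁻¹ h
      simpa using this
    · left
      have := hmono g⁻¹ h
      simpa using this
  loopless := ⟨fun x h => h.1 rfl⟩

/-
Since `G` is finite, an order-preserving action cannot move a point strictly up or down:
iterating `g` would give a strictly monotone orbit that returns to its start after `orderOf g`
steps. So for comparable `x, y`, an equality `g • x = h • y` forces `x = y`. Otherwise, if
`g ≠ h`, then `g • x` is comparable with `(g * h⁻¹) • (h • y) = g • y` where `g * h⁻¹ ≠ 1`, so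
`g • x` and `h • y` are adjacent in the compatibility graph and receive different colors.
-/
section CompatGraph

variable {G P : Type*} [Group G] [PartialOrder P] [MulAction G P]
  (hm : ∀ g : G, ∀ x y : P, x < y → g • x < g • y)
include hm

theorem smul_eq_self_of_comparable {g : G} (hg : IsOfFinOrder g) {a : P}
    (ha : a ≤ g • a ∨ g • a ≤ a) : g • a = a := by
  have hf : StrictMono (g • · : P → P) := fun _ _ => hm g _ _
  have hperiod : (g • · : P → P)^[orderOf g] a = a := by
    simp only [smul_iterate, pow_orderOf_eq_one, one_smul]
  rcases ha with ha | ha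
  · refine ha.eq_or_lt.elim Eq.symm fun hlt => absurd ?_ (lt_irrefl a)
    simpa [hperiod] using hf.strictMono_iterate_of_lt_map hlt hg.orderOf_pos
  · refine ha.eq_or_lt.elim id fun hlt => absurd ?_ (lt_irrefl a)
    simpa [hperiod] using hf.strictAnti_iterate_of_map_lt hlt hg.orderOf_pos

theorem eq_of_smul_eq_smul_of_comparable [Finite G] {g h : G} {x y : P}
    (hxy : x ≤ y ∨ y ≤ x) (he : g • x = h • y) : x = y := by
  have hy : y = (h⁻¹ * g) • x := by rw [mul_smul, he, inv_smul_smul]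
  rw [hy] at hxy ⊢
  exact (smul_eq_self_of_comparable hm (isOfFinOrder_of_finite _) hxy).symm

theorem compatGraph_adj_smul_smul {g h : G} {x y : P} (hgh : g ≠ h) (hne : g • x ≠ h • y)
    (hxy : x ≤ y ∨ y ≤ x) : (compatGraph G hm).Adj (g • x) (h • y) := by
  have hg : Monotone (g • · : P → P) := StrictMono.monotone fun _ _ => hm g _ _
  refine ⟨hne, g * h⁻¹, mul_inv_eq_one.not.2 hgh, ?_⟩
  rw [mul_smul, inv_smul_smul]
  exact hxy.imp (fun hle => hg hle) fun hle => hg hle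

theorem eq_of_coloring_smul_eq [Finite G] {α : Type*} (c : (compatGraph G hm).Coloring α)
    (f : P → G) {x y : P} (hxy : x ≤ y ∨ y ≤ x) (hc : c (f x • x) = c (f y • y)) :
    f x = f y := by
  by_contra hne
  by_cases he : f x • x = f y • y
  · exact hne (congrArg f (eq_of_smul_eq_smul_of_comparable hm hxy he))
  · exact c.valid (compatGraph_adj_smul_smul hm hne he hxy) hc

end CompatGraph

theorem lambda_simplicial_general
    (G P : Type*) [Group G] [Fintype G] [PartialOrder P] [MulAction G P]
    (hm : ∀ g : G, ∀ x y : P, x < y → g • x < g • y)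
    (C : ℕ) (c : (compatGraph G hm).Coloring (Fin C))
    (gx : P → G) :
    (∀ x y : P, (x ≤ y ∨ y ≤ x) → c (gx x • x) = c (gx y • y) → gx x = gx y) ∧
      (∀ x y : P, (x ≤ y ∨ y ≤ x) →
        ((((gx x)⁻¹, c (gx x • x)) : G × Fin C) = ((gx y)⁻¹, c (gx y • y)) ∨
          c (gx x • x) ≠ c (gx y • y))) := by
  have key : ∀ x y : P, (x ≤ y ∨ y ≤ x) → c (gx x • x) = c (gx y • y) → gx x = gx y :=
    fun _ _ hxy => eq_of_coloring_smul_eq hm c gx hxy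
  refine ⟨key, fun x y hxy => or_iff_not_imp_right.2 fun hc => ?_⟩
  rw [not_not] at hc
  exact Prod.ext (congrArg Inv.inv (key x y hxy hc)) hc

/-- With `c` a proper coloring of the compatibility graph and `gx x`
the unique minimizing group element, if `x, y` are comparable and
`c (gx x • x) = c (gx y • y)` then `gx x = gx y`.  Consequently the map
`λ x = ((gx x)⁻¹, c (gx x • x))` sends every chain of `P` to a set of elements with
pairwise distinct second coordinates (distinct elements of the image have distinct
second coordinates). -/
theorem lambda_simplicial
    (G P : Type*) [Group G] [Fintype G] [Nontrivial G] [PartialOrder P] [MulAction G P]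
    (hm : ∀ g : G, ∀ x y : P, x < y → g • x < g • y)
    (hfree : ∀ (g : G) (x : P), g • x = x → g = 1)
    (C : ℕ) (c : (compatGraph G hm).Coloring (Fin C))
    (gx : P → G) (hgx : ∀ (x : P) (h : G), c (gx x • x) ≤ c (h • x)) :
    (∀ x y : P, (x ≤ y ∨ y ≤ x) → c (gx x • x) = c (gx y • y) → gx x = gx y) ∧
      (∀ x y : P, (x ≤ y ∨ y ≤ x) →
        ((((gx x)⁻¹, c (gx x • x)) : G × Fin C) = ((gx y)⁻¹, c (gx y • y)) ∨
          c (gx x • x) ≠ c (gx y • y))) :=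
  lambda_simplicial_general G P hm C c gx
end

section
/- Let H be a graph and r ≥ 2. The cyclic group Z_r acts freely on the Hom poset Hom_p(K_r, H): for the action ω^i·(A_1,…,A_r) = (A_{1+i mod r},…,A_{r+i mod r}), if ω^i·(A_1,…,A_r) = (A_1,…,A_r) for some (A_1,…,A_r) ∈ Hom_p(K_r, H), then i ≡ 0 (mod r). -/
variable {V : Type*}

/-- The Hom poset `Hom_p(K_r, H)`: `r`-tuples of nonempty subsets of `V(H)` that are
pairwise completely joined in `H`, ordered componentwise by inclusion. -/
def HomK (r : ℕ) (H : SimpleGraph V) : Type _ :=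
  {A : Fin r → Finset V // (∀ i, (A i).Nonempty) ∧
    ∀ i j : Fin r, i ≠ j → ∀ a ∈ A i, ∀ b ∈ A j, H.Adj a b}

instance (r : ℕ) (H : SimpleGraph V) : PartialOrder (HomK r H) where
  le A B := ∀ i, A.1 i ⊆ B.1 i
  le_refl A i := subset_rfl
  le_trans A B C h h' i := (h i).trans (h' i)
  le_antisymm A B h h' := Subtype.ext (funext fun i => subset_antisymm (h i) (h' i))

/-- Cyclic shift by `i` on `Hom_p(K_r, H)`: the action of `ω^i ∈ Z_r`. -/
def HomK.shift {r : ℕ} [NeZero r] {H : SimpleGraph V} (i : Fin r) (A : HomK r H) :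
    HomK r H :=
  ⟨fun j => A.1 (j + i), fun j => A.2.1 (j + i), by
    intro j k hjk a ha b hb
    exact A.2.2 (j + i) (k + i) (fun h => hjk (by simpa using add_right_cancel h)) a ha b hb⟩

/-- The compatibility graph of the `Z_r`-poset `Hom_p(K_r, H)` (cyclic shift action):
`A ~ B` iff `A ≠ B` and `A` is comparable with some nontrivial cyclic shift of `B`. -/
def compatK (r : ℕ) [NeZero r] (H : SimpleGraph V) : SimpleGraph (HomK r H) where
  Adj A B := A ≠ B ∧ ∃ i : Fin r, i ≠ 0 ∧ (A ≤ HomK.shift i B ∨ HomK.shift i B ≤ A)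
  symm := by
    have hshift : ∀ (i : Fin r) (A B : HomK r H), A ≤ B → HomK.shift i A ≤ HomK.shift i B :=
      fun i A B h j => h (j + i)
    have hinv : ∀ (i : Fin r) (A : HomK r H), HomK.shift (-i) (HomK.shift i A) = A := by
      intro i A
      apply Subtype.ext
      funext j
      show A.1 (j + -i + i) = A.1 j
      simp
    refine ⟨?_⟩
    rintro A B ⟨hAB, i, hi, h⟩
    refine ⟨hAB.symm, -i, by simpa using hi, ?_⟩
    rcases h with h | h
    · right
      have := hshift (-i) _ _ h
      rwa [hinv] at this
    · left
      have := hshift (-i) _ _ h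
      rwa [hinv] at this
  loopless := ⟨fun A h => h.1 rfl⟩

noncomputable instance (r : ℕ) (H : SimpleGraph V) [Fintype V] : Fintype (HomK r H) := by
  classical exact Subtype.fintype _

namespace HomK

variable {r : ℕ} {H : SimpleGraph V}

theorem disjoint_of_ne (A : HomK r H) {i j : Fin r} (hij : i ≠ j) : Disjoint (A.1 i) (A.1 j) :=
  Finset.disjoint_left.mpr fun a hai haj => H.loopless.irrefl a (A.2.2 i j hij a hai a haj)

theorem val_injective (A : HomK r H) : Function.Injective A.1 := by
  intro i j hij
  by_contra hne
  obtain ⟨a, ha⟩ := A.2.1 i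
  exact Finset.disjoint_left.mp (A.disjoint_of_ne hne) ha (hij ▸ ha)

end HomK

theorem cyclic_shift_free_general
    (H : SimpleGraph V) (r : ℕ) [NeZero r] :
    ∀ (i : Fin r) (A : HomK r H), HomK.shift i A = A → i = 0 := by
  intro i A h
  have hcoord : A.1 (0 + i) = A.1 0 := congrFun (congrArg Subtype.val h) 0
  simpa using A.val_injective hcoord

/-- For a graph `H` and `r ≥ 2`, the cyclic group `Z_r` acts freely
on `Hom_p(K_r, H)` by cyclic shift: if the shift by `i` fixes some element, then
`i = 0` in `Z_r`. -/
theorem cyclic_shift_free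
    (H : SimpleGraph V) (r : ℕ) [NeZero r] (hr : 2 ≤ r) :
    ∀ (i : Fin r) (A : HomK r H), HomK.shift i A = A → i = 0 :=
  cyclic_shift_free_general H r
end

section
/- Let H be a graph, r ≥ 1, and suppose Hom_p(C_{2r}, H) is nonempty. There is a graph homomorphism from C_{Hom_p(C_{2r},H)} (compatibility graph for the reversal Z_2-action) to H, and hence χ(C_{Hom_p(C_{2r},H)}) ≤ χ(H). -/
variable {V : Type*}

instance NeZero.two_mul {r : ℕ} [NeZero r] : NeZero (2 * r) :=
  ⟨by have := NeZero.ne r; omega⟩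

/-- The Hom poset `Hom_p(C_n, H)` of the cycle on `n` vertices: `n`-tuples of nonempty
subsets of `V(H)` with `A_i × A_{i+1} ⊆ E(H)` for all `i` (indices mod `n`),
ordered componentwise by inclusion. -/
def HomC (n : ℕ) [NeZero n] (H : SimpleGraph V) : Type _ :=
  {A : Fin n → Finset V // (∀ i, (A i).Nonempty) ∧
    ∀ i : Fin n, ∀ a ∈ A i, ∀ b ∈ A (i + 1), H.Adj a b}

instance (n : ℕ) [NeZero n] (H : SimpleGraph V) : PartialOrder (HomC n H) where
  le A B := ∀ i, A.1 i ⊆ B.1 i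
  le_refl A i := subset_rfl
  le_trans A B C h h' i := (h i).trans (h' i)
  le_antisymm A B h h' := Subtype.ext (funext fun i => subset_antisymm (h i) (h' i))

/-- Reversal of a tuple in `Hom_p(C_n, H)`: the action of the nontrivial element of
`Z_2` sending `(A_1, …, A_n)` to `(A_n, …, A_1)`. -/
def HomC.rev {n : ℕ} [NeZero n] {H : SimpleGraph V} (A : HomC n H) : HomC n H :=
  ⟨fun j => A.1 (-1 - j), fun j => A.2.1 (-1 - j), by
    intro j a ha b hb
    have h := A.2.2 (-1 - (j + 1))
    have e1 : (-1 - (j + 1)) + 1 = -1 - j := by rw [sub_add_eq_sub_sub, sub_add_cancel]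
    rw [e1] at h
    exact (h b hb a ha).symm⟩

/-- The compatibility graph of the `Z_2`-poset `Hom_p(C_n, H)` with the reversal
action: `A ~ B` iff `A ≠ B` and `A` is comparable with the reversal of `B`. -/
def compatC (n : ℕ) [NeZero n] (H : SimpleGraph V) : SimpleGraph (HomC n H) where
  Adj A B := A ≠ B ∧ (A ≤ HomC.rev B ∨ HomC.rev B ≤ A)
  symm := by
    have hmono : ∀ A B : HomC n H, A ≤ B → HomC.rev A ≤ HomC.rev B :=
      fun A B h j => h (-1 - j)
    have hinv : ∀ A : HomC n H, HomC.rev (HomC.rev A) = A := by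
      intro A
      apply Subtype.ext
      funext j
      show A.1 (-1 - (-1 - j)) = A.1 j
      norm_num
    constructor
    rintro A B ⟨hAB, h⟩
    refine ⟨hAB.symm, ?_⟩
    rcases h with h | h
    · right
      have := hmono _ _ h
      rwa [hinv] at this
    · left
      have := hmono _ _ h
      rwa [hinv] at this
  loopless := ⟨fun A h => h.1 rfl⟩

noncomputable instance (n : ℕ) [NeZero n] (H : SimpleGraph V) [Fintype V] :
    Fintype (HomC n H) := by
  classical exact Subtype.fintype _

namespace HomC

variable {n : ℕ} [NeZero n] {H : SimpleGraph V}

/-- With `Fin n` indexing, `-1` and `0` are the cycle vertices `n` and `1`: their edge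
closes the cycle. -/
theorem adj_of_mem_neg_one_of_mem_zero (A : HomC n H) {a b : V} (ha : a ∈ A.1 (-1))
    (hb : b ∈ A.1 0) : H.Adj a b :=
  A.2.2 (-1) a ha b (by rwa [neg_add_cancel])

noncomputable def head (A : HomC n H) : V :=
  (A.2.1 0).choose

theorem head_mem (A : HomC n H) : A.head ∈ A.1 0 :=
  (A.2.1 0).choose_spec

theorem adj_head_of_le_rev {A B : HomC n H} (h : A ≤ B.rev) : H.Adj A.head B.head :=
  B.adj_of_mem_neg_one_of_mem_zero (by simpa [rev] using h 0 A.head_mem) B.head_mem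

theorem adj_head_of_rev_le {A B : HomC n H} (h : B.rev ≤ A) : H.Adj A.head B.head :=
  (A.adj_of_mem_neg_one_of_mem_zero (h (-1) (by simpa [rev] using B.head_mem))
    A.head_mem).symm

end HomC

noncomputable def compatC.headHom (n : ℕ) [NeZero n] (H : SimpleGraph V) :
    compatC n H →g H where
  toFun := HomC.head
  map_rel' := by
    rintro A B ⟨-, h | h⟩
    · exact HomC.adj_head_of_le_rev h
    · exact HomC.adj_head_of_rev_le h

theorem compatC_hom_to_H_general
    (H : SimpleGraph V) (r : ℕ) [NeZero r] :
    Nonempty (compatC (2 * r) H →g H) ∧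
      (compatC (2 * r) H).chromaticNumber ≤ H.chromaticNumber :=
  ⟨⟨compatC.headHom (2 * r) H⟩,
    SimpleGraph.chromaticNumber_mono_of_hom (compatC.headHom (2 * r) H)⟩

/-- For a graph `H` and `r ≥ 1` with `Hom_p(C_{2r}, H)` nonempty,
there is a graph homomorphism from the compatibility graph `C_{Hom_p(C_{2r}, H)}`
(for the reversal `Z_2`-action) to `H`; hence
`χ(C_{Hom_p(C_{2r}, H)}) ≤ χ(H)`. -/
theorem compatC_hom_to_H
    (H : SimpleGraph V) (r : ℕ) [NeZero r] (hne : Nonempty (HomC (2 * r) H)) :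
    Nonempty (compatC (2 * r) H →g H) ∧
      (compatC (2 * r) H).chromaticNumber ≤ H.chromaticNumber :=
  compatC_hom_to_H_general H r
end
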